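/- arXiv:2312.17406 — 2 statements merged into one kernel-verified Lean document; each statement's English description precedes it below -/
import Mathlib

section
/- Let q^{(σ)} be a family of sampling probabilities and let q̃_k (k ∈ ℕ) be a family of asymptotic-expansion coefficients for q^{(σ)}. Then for every k ∈ ℕ and every integer n_1 > 1: q̃_k(n_1 e_1) = q̃_k((n_1−1) e_1) − 1_{k≥1} θ(1 − P_{11}) q̃_{k−1}((n_1−1) e_1) + 1_{k≥2} ∑_{j=2}^d (n_1 − 2 + θ P_{j1}) q̃_{k−2}((n_1−2) e_1 + e_j). -/
open Finset Filter Asymptotics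

noncomputable section

/-- The `i`-th standard unit vector of `ℤ^d`. -/
def stdE {d : ℕ} (i : Fin d) : Fin d → ℤ := fun j => if j = i then 1 else 0

/-- The total size `‖n‖ = n_1 + ⋯ + n_d` of a configuration. -/
def tot {d : ℕ} (n : Fin d → ℤ) : ℤ := ∑ i, n i

/-- `n ∈ ℕ^d`, i.e. all components of `n : ℤ^d` are nonnegative. -/
def IsNatVec {d : ℕ} (n : Fin d → ℤ) : Prop := ∀ i, 0 ≤ n i

/-- A family of sampling probabilities `q^{(σ)} : ℤ^d → ℝ`, indexed by `σ > 0`: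
`q^{(σ)}(0) = 1`; `q^{(σ)}(n) = 0` if `n` has a negative component; the consistency
condition `∑_i q^{(σ)}(n+e_i) = q^{(σ)}(n)` holds on `ℕ^d`; and the sampling recursion
holds on `ℕ^d ∖ {0}`.  (Allele `1` is represented by the index `0 : Fin d`.) -/
def IsSamplingFamily {d : ℕ} [NeZero d] (θ : ℝ) (P : Fin d → Fin d → ℝ)
    (q : ℝ → (Fin d → ℤ) → ℝ) : Prop :=
  (∀ σ : ℝ, 0 < σ → q σ 0 = 1) ∧
  (∀ σ : ℝ, 0 < σ → ∀ n : Fin d → ℤ, (∃ i, n i < 0) → q σ n = 0) ∧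
  (∀ σ : ℝ, 0 < σ → ∀ n : Fin d → ℤ, IsNatVec n →
    ∑ i, q σ (n + stdE i) = q σ n) ∧
  (∀ σ : ℝ, 0 < σ → ∀ n : Fin d → ℤ, IsNatVec n → n ≠ 0 →
    ((tot n : ℝ) * ((tot n : ℝ) - 1 + θ) + ((tot n : ℝ) - (n 0 : ℝ)) * σ) * q σ n =
      (∑ i, (n i : ℝ) * ((n i : ℝ) - 1) * q σ (n - stdE i))
      + (∑ i, ∑ j, (n i : ℝ) * θ * P j i * q σ (n - stdE i + stdE j))
      + σ * (tot n : ℝ) * ∑ i ∈ univ.erase 0, q σ (n + stdE i))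

/-- A family of asymptotic-expansion coefficients `q̃_k : ℤ^d → ℝ` for a family of
sampling probabilities `q^{(σ)}`:  `q̃_0(0) = 1`, `q̃_k(0) = 0` for `k ≥ 1`,
`q̃_k(n) = 0` if `n` has a negative component, and for every `n ∈ ℕ^d` and `K ∈ ℕ`,
`σ^{‖n‖-n_1} q^{(σ)}(n) - ∑_{k=0}^K q̃_k(n) σ^{-k} = O(σ^{-(K+1)})` as `σ → ∞`. -/
def IsExpansionCoeffs {d : ℕ} [NeZero d] (q : ℝ → (Fin d → ℤ) → ℝ)
    (qt : ℕ → (Fin d → ℤ) → ℝ) : Prop :=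
  qt 0 0 = 1 ∧
  (∀ k : ℕ, 1 ≤ k → qt k 0 = 0) ∧
  (∀ k : ℕ, ∀ n : Fin d → ℤ, (∃ i, n i < 0) → qt k n = 0) ∧
  (∀ n : Fin d → ℤ, IsNatVec n → ∀ K : ℕ,
    (fun σ : ℝ => σ ^ (tot n - n 0) * q σ n
        - ∑ k ∈ range (K + 1), qt k n * σ ^ (-(k : ℤ)))
      =O[atTop] fun σ : ℝ => σ ^ (-(K + 1 : ℤ)))

/-!
Take `n = m e₁`. Since `‖n‖ = n₁`, the term `σ q^{(σ)}(n)` drops out of the left side of the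
sampling recursion, and after division by `m` both the recursion and the consistency condition
become linear relations, valid for all `σ > 0`, between `q^{(σ)}(m e₁)`, `q^{(σ)}((m-1) e₁)`,
`q^{(σ)}(m e₁ + e_j)` and `q^{(σ)}((m-1) e₁ + e_j)` (`j ≠ 1`), the latter two expanding in
`σ⁻¹` with one extra factor `σ⁻¹`. Coefficients of an expansion in powers of `σ⁻¹` are unique
(each is a limit determined by the previous ones), so every such relation holds coefficientwise.
The claim is the combination: consistency at `(n₁-1) e₁` in degree `k`, plus the recursion at
`(n₁-1) e₁` in degree `k-1`, minus `n₁-2` times consistency at `(n₁-2) e₁` in degree `k-1`.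
-/

open Topology

def HasExpansionAtTop (f : ℝ → ℝ) (c : ℕ → ℝ) : Prop :=
  ∀ K : ℕ, (fun σ : ℝ => f σ - ∑ k ∈ range (K + 1), c k * σ⁻¹ ^ k)
    =O[atTop] fun σ : ℝ => σ⁻¹ ^ (K + 1)

theorem isBigO_inv_pow_succ_inv_pow (K : ℕ) :
    (fun σ : ℝ => σ⁻¹ ^ (K + 1)) =O[atTop] fun σ : ℝ => σ⁻¹ ^ K :=
  ((tendsto_inv_atTop_zero.isBigO_one ℝ).mul (isBigO_refl (fun σ : ℝ => σ⁻¹ ^ K) atTop)).congr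
    (fun _ => (pow_succ' _ _).symm) fun _ => one_mul _

namespace HasExpansionAtTop

variable {f g : ℝ → ℝ} {c c' : ℕ → ℝ}

theorem add (hf : HasExpansionAtTop f c) (hg : HasExpansionAtTop g c') :
    HasExpansionAtTop (fun σ => f σ + g σ) (fun k => c k + c' k) := fun K =>
  ((hf K).add (hg K)).congr_left fun σ => by simp only [add_mul, sum_add_distrib]; ring

theorem const_mul (a : ℝ) (hf : HasExpansionAtTop f c) :
    HasExpansionAtTop (fun σ => a * f σ) (fun k => a * c k) := fun K =>
  ((hf K).const_mul_left a).congr_left fun σ => by simp only [mul_sub, mul_sum, mul_assoc]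

theorem sum {ι : Type*} (s : Finset ι) {f : ι → ℝ → ℝ} {c : ι → ℕ → ℝ}
    (h : ∀ i ∈ s, HasExpansionAtTop (f i) (c i)) :
    HasExpansionAtTop (fun σ => ∑ i ∈ s, f i σ) (fun k => ∑ i ∈ s, c i k) := fun K =>
  (IsBigO.fun_sum fun i hi => h i hi K).congr_left fun σ => by
    simp only [sum_mul, sum_sub_distrib]; rw [sum_comm]

theorem isBigO_sub_sum_range (hf : HasExpansionAtTop f c) (K : ℕ) :
    (fun σ : ℝ => f σ - ∑ k ∈ range K, c k * σ⁻¹ ^ k) =O[atTop] fun σ : ℝ => σ⁻¹ ^ K :=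
  (((hf K).trans (isBigO_inv_pow_succ_inv_pow K)).add
    ((isBigO_refl (fun σ : ℝ => σ⁻¹ ^ K) atTop).const_mul_left (c K))).congr_left fun σ => by
    rw [sum_range_succ]; ring

theorem tendsto_coeff (hf : HasExpansionAtTop f c) (K : ℕ) :
    Tendsto (fun σ : ℝ => σ ^ K * (f σ - ∑ k ∈ range K, c k * σ⁻¹ ^ k)) atTop (𝓝 (c K)) := by
  have hrem : (fun σ : ℝ => σ ^ K * (f σ - ∑ k ∈ range (K + 1), c k * σ⁻¹ ^ k))
      =O[atTop] fun σ : ℝ => σ⁻¹ :=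
    ((isBigO_refl (fun σ : ℝ => σ ^ K) atTop).mul (hf K)).congr' EventuallyEq.rfl
      ((eventually_ne_atTop 0).mono fun σ hσ => by
        dsimp only
        rw [pow_succ, ← mul_assoc, inv_pow, mul_inv_cancel₀ (pow_ne_zero K hσ), one_mul])
  have hlim := (hrem.trans_tendsto tendsto_inv_atTop_zero).const_add (c K)
  rw [add_zero] at hlim
  refine hlim.congr' ((eventually_ne_atTop 0).mono fun σ hσ => ?_)
  rw [sum_range_succ, inv_pow, sub_add_eq_sub_sub, mul_sub (σ ^ K), mul_comm (c K),
    ← mul_assoc, mul_inv_cancel₀ (pow_ne_zero K hσ), one_mul]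
  ring

theorem unique (hf : HasExpansionAtTop f c) (hg : HasExpansionAtTop g c')
    (hfg : f =ᶠ[atTop] g) : c = c' := by
  funext K
  induction K using Nat.strong_induction_on with
  | _ K ih =>
    refine tendsto_nhds_unique (hf.tendsto_coeff K) ((hg.tendsto_coeff K).congr' ?_)
    filter_upwards [hfg] with σ hσ
    rw [hσ, sum_congr rfl fun k hk => by rw [← ih k (mem_range.mp hk)]]

theorem of_id_mul (hf : HasExpansionAtTop (fun σ => σ * f σ) c) :
    HasExpansionAtTop f (fun k => if k = 0 then 0 else c (k - 1)) := fun K =>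
  ((isBigO_refl (fun σ : ℝ => σ⁻¹) atTop).mul (hf.isBigO_sub_sum_range K)).congr'
    ((eventually_ne_atTop 0).mono fun σ hσ => by
      simp only [sum_range_succ', Nat.add_one_ne_zero, ↓reduceIte, Nat.add_sub_cancel, zero_mul,
        add_zero, mul_sub, ← mul_assoc, inv_mul_cancel₀ hσ, one_mul, mul_sum, pow_succ']
      congr 1
      exact sum_congr rfl fun k _ => by ring)
    (Eventually.of_forall fun σ => (pow_succ' _ _).symm)

end HasExpansionAtTop

section Vectors

variable {d : ℕ}

theorem smul_stdE_apply (m : ℤ) (i j : Fin d) : (m • stdE i) j = if j = i then m else 0 := by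
  simp [stdE]

theorem tot_add (a b : Fin d → ℤ) : tot (a + b) = tot a + tot b := sum_add_distrib

theorem tot_smul (m : ℤ) (a : Fin d → ℤ) : tot (m • a) = m * tot a := by
  simp [tot, mul_sum]

theorem tot_stdE (i : Fin d) : tot (stdE i) = 1 := by
  simp [tot, stdE]

theorem isNatVec_stdE (i : Fin d) : IsNatVec (stdE i) := fun j => by
  unfold stdE; split_ifs <;> norm_num

theorem IsNatVec.add {a b : Fin d → ℤ} (ha : IsNatVec a) (hb : IsNatVec b) : IsNatVec (a + b) :=
  fun i => add_nonneg (ha i) (hb i)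

theorem IsNatVec.smul {a : Fin d → ℤ} {m : ℤ} (hm : 0 ≤ m) (ha : IsNatVec a) : IsNatVec (m • a) :=
  fun i => mul_nonneg hm (ha i)

end Vectors

variable {d : ℕ} [NeZero d] {q : ℝ → (Fin d → ℤ) → ℝ} {qt : ℕ → (Fin d → ℤ) → ℝ}

namespace IsExpansionCoeffs

variable (hqt : IsExpansionCoeffs q qt)
include hqt

theorem hasExpansionAtTop {n : Fin d → ℤ} (hn : IsNatVec n) :
    HasExpansionAtTop (fun σ => σ ^ (tot n - n 0) * q σ n) (fun k => qt k n) := fun K => by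
  simpa only [zpow_neg, ← Nat.cast_succ, zpow_natCast, inv_pow] using hqt.2.2.2 n hn K

theorem hasExpansionAtTop_smul_stdE_zero {m : ℤ} (hm : 0 ≤ m) :
    HasExpansionAtTop (fun σ => q σ (m • stdE 0)) (fun k => qt k (m • stdE 0)) := by
  have hexp : tot (m • stdE (0 : Fin d)) - (m • stdE (0 : Fin d)) 0 = 0 := by
    rw [tot_smul, tot_stdE, smul_stdE_apply, if_pos rfl, mul_one, sub_self]
  simpa only [hexp, zpow_zero, one_mul] using hqt.hasExpansionAtTop ((isNatVec_stdE 0).smul hm)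

theorem hasExpansionAtTop_smul_stdE_zero_add_stdE {m : ℤ} (hm : 0 ≤ m) {j : Fin d} (hj : j ≠ 0) :
    HasExpansionAtTop (fun σ => σ * q σ (m • stdE 0 + stdE j))
      (fun k => qt k (m • stdE 0 + stdE j)) := by
  have hexp : tot (m • stdE 0 + stdE j) - (m • stdE 0 + stdE j : Fin d → ℤ) 0 = 1 := by
    rw [tot_add, tot_smul, tot_stdE, tot_stdE, Pi.add_apply, smul_stdE_apply, if_pos rfl,
      stdE, if_neg hj.symm]
    ring
  simpa only [hexp, zpow_one] using
    hqt.hasExpansionAtTop (((isNatVec_stdE 0).smul hm).add (isNatVec_stdE j))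

end IsExpansionCoeffs

namespace IsSamplingFamily

variable {θ : ℝ} {P : Fin d → Fin d → ℝ} (hq : IsSamplingFamily θ P q)
include hq

theorem consistency_smul_stdE_zero {m : ℤ} (hm : 0 ≤ m) {σ : ℝ} (hσ : 0 < σ) :
    q σ ((m + 1) • stdE 0) + ∑ j ∈ univ.erase 0, q σ (m • stdE 0 + stdE j)
      = q σ (m • stdE 0) := by
  rw [← hq.2.2.1 σ hσ _ ((isNatVec_stdE 0).smul hm), ← add_sum_erase _ _ (mem_univ 0), add_smul,
    one_smul]

theorem recursion_smul_stdE_zero {m : ℤ} (hm : 1 ≤ m) {σ : ℝ} (hσ : 0 < σ) :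
    ((m : ℝ) - 1 + θ - θ * P 0 0) * q σ (m • stdE 0)
      = ((m : ℝ) - 1) * q σ ((m - 1) • stdE 0)
        + ∑ j ∈ univ.erase 0, θ * P j 0 * q σ ((m - 1) • stdE 0 + stdE j)
        + ∑ j ∈ univ.erase 0, σ * q σ (m • stdE 0 + stdE j) := by
  set n : Fin d → ℤ := m • stdE 0
  have hn : ∀ i, n i = if i = 0 then m else 0 := smul_stdE_apply m 0
  have hsub : n - stdE 0 = (m - 1) • stdE 0 := by rw [sub_smul, one_smul]
  have hadd : (m - 1) • stdE 0 + stdE 0 = n := by rw [sub_smul, one_smul, sub_add_cancel]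
  have hne : n ≠ 0 := fun h => (by omega : m ≠ 0) (by simpa [hn] using congrFun h 0)
  have h := hq.2.2.2 σ hσ n ((isNatVec_stdE 0).smul (by omega)) hne
  have hdiag : ∑ i, (n i : ℝ) * ((n i : ℝ) - 1) * q σ (n - stdE i)
      = m * (m - 1) * q σ ((m - 1) • stdE 0) := by
    rw [Fintype.sum_eq_single 0 fun i hi => by simp [hn, hi], hn 0, if_pos rfl, hsub]
  have hmut : ∑ i, ∑ j, (n i : ℝ) * θ * P j i * q σ (n - stdE i + stdE j)
      = m * (θ * P 0 0 * q σ n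
        + ∑ j ∈ univ.erase 0, θ * P j 0 * q σ ((m - 1) • stdE 0 + stdE j)) := by
    rw [Fintype.sum_eq_single 0 fun i hi => by simp [hn, hi], ← add_sum_erase _ _ (mem_univ 0),
      hsub, hadd, hn 0, if_pos rfl, mul_add, mul_sum]
    congr 1
    · ring
    · exact sum_congr rfl fun j _ => by ring
  rw [hdiag, hmut, tot_smul, tot_stdE, mul_one, hn 0, if_pos rfl] at h
  have hm0 : (m : ℝ) ≠ 0 := by exact_mod_cast (by omega : m ≠ 0)
  refine mul_left_cancel₀ hm0 ?_
  rw [← mul_sum]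
  linear_combination h

variable (hqt : IsExpansionCoeffs q qt)
include hqt

theorem coeff_consistency_smul_stdE_zero {m : ℤ} (hm : 0 ≤ m) (k : ℕ) :
    qt k ((m + 1) • stdE 0)
      + ∑ j ∈ univ.erase 0, (if k = 0 then 0 else qt (k - 1) (m • stdE 0 + stdE j))
      = qt k (m • stdE 0) := by
  have hlhs := (hqt.hasExpansionAtTop_smul_stdE_zero (by omega : 0 ≤ m + 1)).add
    (HasExpansionAtTop.sum (univ.erase 0) fun j hj =>
      (hqt.hasExpansionAtTop_smul_stdE_zero_add_stdE hm (ne_of_mem_erase hj)).of_id_mul)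
  exact congrFun (hlhs.unique (hqt.hasExpansionAtTop_smul_stdE_zero hm)
    ((eventually_gt_atTop 0).mono fun σ hσ => hq.consistency_smul_stdE_zero hm hσ)) k

theorem coeff_recursion_smul_stdE_zero {m : ℤ} (hm : 1 ≤ m) (k : ℕ) :
    ((m : ℝ) - 1 + θ - θ * P 0 0) * qt k (m • stdE 0)
      = ((m : ℝ) - 1) * qt k ((m - 1) • stdE 0)
        + ∑ j ∈ univ.erase 0,
            θ * P j 0 * (if k = 0 then 0 else qt (k - 1) ((m - 1) • stdE 0 + stdE j))
        + ∑ j ∈ univ.erase 0, qt k (m • stdE 0 + stdE j) := by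
  have hlhs := (hqt.hasExpansionAtTop_smul_stdE_zero (by omega : 0 ≤ m)).const_mul
    ((m : ℝ) - 1 + θ - θ * P 0 0)
  have hrhs := (((hqt.hasExpansionAtTop_smul_stdE_zero (by omega : 0 ≤ m - 1)).const_mul
    ((m : ℝ) - 1)).add (HasExpansionAtTop.sum (univ.erase 0) fun j hj =>
      (hqt.hasExpansionAtTop_smul_stdE_zero_add_stdE (by omega : 0 ≤ m - 1)
        (ne_of_mem_erase hj)).of_id_mul.const_mul (θ * P j 0))).add
    (HasExpansionAtTop.sum (univ.erase 0) fun j hj =>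
      hqt.hasExpansionAtTop_smul_stdE_zero_add_stdE (by omega : 0 ≤ m) (ne_of_mem_erase hj))
  exact congrFun (hlhs.unique hrhs
    ((eventually_gt_atTop 0).mono fun σ hσ => hq.recursion_smul_stdE_zero hm hσ)) k

end IsSamplingFamily

theorem recursion_fit_general {d : ℕ} (θ : ℝ)
    (P : Fin (d + 2) → Fin (d + 2) → ℝ)
    (q : ℝ → (Fin (d + 2) → ℤ) → ℝ) (qt : ℕ → (Fin (d + 2) → ℤ) → ℝ)
    (hq : IsSamplingFamily θ P q) (hqt : IsExpansionCoeffs q qt)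
    (k : ℕ) (n₁ : ℤ) (hn₁ : 1 < n₁) :
    qt k (n₁ • stdE 0)
      = qt k ((n₁ - 1) • stdE 0)
        - (if 1 ≤ k then θ * (1 - P 0 0) * qt (k - 1) ((n₁ - 1) • stdE 0) else 0)
        + (if 2 ≤ k then
            ∑ j ∈ univ.erase 0,
              ((n₁ : ℝ) - 2 + θ * P j 0) * qt (k - 2) ((n₁ - 2) • stdE 0 + stdE j)
          else 0) := by
  have hC₁ := hq.coeff_consistency_smul_stdE_zero hqt (m := n₁ - 1) (by omega)
  have hC₂ := hq.coeff_consistency_smul_stdE_zero hqt (m := n₁ - 2) (by omega)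
  have hR := hq.coeff_recursion_smul_stdE_zero hqt (m := n₁ - 1) (by omega)
  rw [sub_add_cancel] at hC₁
  rw [show n₁ - 2 + 1 = n₁ - 1 by ring] at hC₂
  rw [show n₁ - 1 - 1 = n₁ - 2 by ring] at hR
  push_cast at hR
  match k with
  | 0 => simpa using hC₁ 0
  | 1 =>
    have h₁ := hC₁ 1
    have h₂ := hR 0
    have h₃ := hC₂ 0
    simp only [one_ne_zero, ↓reduceIte, Nat.sub_self, mul_zero, sum_const_zero, add_zero]
      at h₁ h₂ h₃
    simp only [le_refl, ↓reduceIte, Nat.sub_self, Nat.not_ofNat_le_one, add_zero]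
    linear_combination h₁ + h₂ - ((n₁ : ℝ) - 2) * h₃
  | k + 2 =>
    have h₁ := hC₁ (k + 2)
    have h₂ := hR (k + 1)
    have h₃ := hC₂ (k + 1)
    simp only [Nat.add_eq_zero_iff, OfNat.ofNat_ne_zero, one_ne_zero, and_false, ↓reduceIte,
      Nat.add_one_sub_one, add_tsub_cancel_right] at h₁ h₂ h₃
    simp only [le_add_iff_nonneg_left, zero_le, ↓reduceIte, Nat.add_one_sub_one,
      add_tsub_cancel_right, add_mul, sum_add_distrib, ← mul_sum]
    linear_combination h₁ + h₂ - ((n₁ : ℝ) - 2) * h₃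

/-- **Theorem 4.3(III)** (recursion, fit allele only): for `n_1 > 1`,
`q̃_k(n_1 e_1) = q̃_k((n_1-1)e_1) - 1_{k≥1} θ(1-P_{11}) q̃_{k-1}((n_1-1)e_1)
+ 1_{k≥2} ∑_{j=2}^d (n_1-2+θP_{j1}) q̃_{k-2}((n_1-2)e_1+e_j)`. -/
theorem recursion_fit {d : ℕ} (θ : ℝ) (hθ : 0 < θ)
    (P : Fin (d + 2) → Fin (d + 2) → ℝ)
    (hPnonneg : ∀ i j, 0 ≤ P i j) (hProw : ∀ i, ∑ j, P i j = 1)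
    (q : ℝ → (Fin (d + 2) → ℤ) → ℝ) (qt : ℕ → (Fin (d + 2) → ℤ) → ℝ)
    (hq : IsSamplingFamily θ P q) (hqt : IsExpansionCoeffs q qt)
    (k : ℕ) (n₁ : ℤ) (hn₁ : 1 < n₁) :
    qt k (n₁ • stdE 0)
      = qt k ((n₁ - 1) • stdE 0)
        - (if 1 ≤ k then θ * (1 - P 0 0) * qt (k - 1) ((n₁ - 1) • stdE 0) else 0)
        + (if 2 ≤ k then
            ∑ j ∈ univ.erase 0,
              ((n₁ : ℝ) - 2 + θ * P j 0) * qt (k - 2) ((n₁ - 2) • stdE 0 + stdE j)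
          else 0) :=
  recursion_fit_general θ P q qt hq hqt k n₁ hn₁
end
end

section
/- Assume parent-independent mutation: P_{ij} = Q_j for all i, j, where Q_1,…,Q_d > 0 and ∑_{j=1}^d Q_j = 1. Let q^{(σ)} be a family of sampling probabilities and let q̃_k (k ∈ ℕ) be a family of asymptotic-expansion coefficients for q^{(σ)}. Then for every k ∈ ℕ and every n ∈ ℕ^d with ‖n‖ > 1: (‖n‖ − n_1) q̃_k(n) = ∑_{i=2}^d n_i(n_i − 1 + θ Q_i) q̃_k(n − e_i) + 1_{k≥1} [ −‖n‖(‖n‖ − 1 + θ) q̃_{k−1}(n) + n_1(n_1 − 1 + θ Q_1) q̃_{k−1}(n − e_1) + ‖n‖ ∑_{i=2}^d q̃_{k−1}(n + e_i) ]. -/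
/-!
Multiplying the sampling recursion at `n` by `σ^{‖n‖-n_1-1}` turns it into an identity
`A(σ) + σ⁻¹ B(σ) = 0` between the rescaled probabilities `r_m(σ) = σ^{‖m‖-m_1} q^{(σ)}(m)` at
`m = n`, `n - e_i` and `n + e_i`; under parent-independent mutation the consistency condition
collapses the mutation term to `n_i θ Q_i q^{(σ)}(n - e_i)`. Each `r_m` has the expansion
`∑ q̃_k(m) σ⁻ᵏ` (trivially so when `m` has a negative entry), expansions are linear and
multiplication by `σ⁻¹` shifts their coefficients, and a function vanishing for large `σ` has
only zero coefficients. Reading off the coefficient of `σ⁻ᵏ` gives the recursion.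
-/

open Finset Filter Asymptotics

noncomputable section

def HasAsymptoticExpansion (f : ℝ → ℝ) (c : ℕ → ℝ) : Prop :=
  ∀ K : ℕ, (fun σ : ℝ => f σ - ∑ k ∈ range (K + 1), c k * σ ^ (-(k : ℤ)))
    =O[atTop] fun σ : ℝ => σ ^ (-(K + 1 : ℤ))

namespace HasAsymptoticExpansion

variable {f g : ℝ → ℝ} {c d : ℕ → ℝ}

theorem congr (hf : HasAsymptoticExpansion f c) (hfg : f =ᶠ[atTop] g) :
    HasAsymptoticExpansion g c := fun K =>
  (hf K).congr' (hfg.sub EventuallyEq.rfl) EventuallyEq.rfl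

theorem zero : HasAsymptoticExpansion (fun _ => 0) (fun _ => 0) := fun K => by
  simpa using isBigO_zero _ _

theorem sub (hf : HasAsymptoticExpansion f c) (hg : HasAsymptoticExpansion g d) :
    HasAsymptoticExpansion (fun σ => f σ - g σ) (fun k => c k - d k) := fun K =>
  ((hf K).sub (hg K)).congr_left fun σ => by simp only [sub_mul, sum_sub_distrib]; ring

theorem add (hf : HasAsymptoticExpansion f c) (hg : HasAsymptoticExpansion g d) :
    HasAsymptoticExpansion (fun σ => f σ + g σ) (fun k => c k + d k) := fun K =>
  ((hf K).add (hg K)).congr_left fun σ => by simp only [add_mul, sum_add_distrib]; ring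

theorem const_mul (hf : HasAsymptoticExpansion f c) (a : ℝ) :
    HasAsymptoticExpansion (fun σ => a * f σ) (fun k => a * c k) := fun K =>
  ((hf K).const_mul_left a).congr_left fun σ => by simp only [mul_sub, mul_sum, mul_assoc]

theorem sum {ι : Type*} {s : Finset ι} {F : ι → ℝ → ℝ} {C : ι → ℕ → ℝ}
    (h : ∀ i ∈ s, HasAsymptoticExpansion (F i) (C i)) :
    HasAsymptoticExpansion (fun σ => ∑ i ∈ s, F i σ) (fun k => ∑ i ∈ s, C i k) := fun K =>
  (IsBigO.fun_sum fun i hi => h i hi K).congr_left fun σ => by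
    simp only [sum_mul, sum_sub_distrib]; rw [sum_comm]

theorem isBigO_one (hf : HasAsymptoticExpansion f c) : f =O[atTop] fun _ => (1 : ℝ) := by
  have hf0 : (fun σ => f σ - c 0) =O[atTop] fun _ => (1 : ℝ) :=
    ((hf 0).trans_tendsto (tendsto_zpow_atTop_zero (by norm_num))).isBigO_one ℝ |>.congr_left
      fun σ => by simp
  simpa using hf0.add (isBigO_const_one ℝ (c 0) atTop)

theorem inv_mul (hf : HasAsymptoticExpansion f c) :
    HasAsymptoticExpansion (fun σ => σ⁻¹ * f σ) (fun k => if 1 ≤ k then c (k - 1) else 0) := by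
  rintro (_ | K)
  · simpa using (isBigO_refl (fun σ : ℝ => σ⁻¹) atTop).mul hf.isBigO_one
  · have hinv : ∀ᶠ σ : ℝ in atTop, ∀ a : ℤ, σ⁻¹ * σ ^ a = σ ^ (a - 1) := by
      filter_upwards [eventually_ne_atTop 0] with σ hσ a
      rw [zpow_sub_one₀ hσ, mul_comm]
    refine ((isBigO_refl (fun σ : ℝ => σ⁻¹) atTop).mul (hf K)).congr' ?_ ?_ <;>
      filter_upwards [hinv] with σ hσ
    · rw [sum_range_succ' _ (K + 1), mul_sub, mul_sum]
      simp only [le_add_iff_nonneg_left, zero_le, if_true, Nat.add_sub_cancel,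
        mul_left_comm _ (c _), hσ, Nat.one_le_iff_ne_zero, ne_eq, not_true, if_false, zero_mul,
        add_zero]
      congr 2 with k; push_cast; ring_nf
    · rw [hσ]; push_cast; ring_nf

theorem eq_zero_of_eventuallyEq_zero (hf : HasAsymptoticExpansion f c) (hf0 : f =ᶠ[atTop] 0)
    (k : ℕ) : c k = 0 := by
  refine Nat.strong_induction_on k fun k ih => ?_
  have hk : (fun σ : ℝ => c k * σ ^ (-(k : ℤ))) =O[atTop] fun σ : ℝ => σ ^ (-(k + 1 : ℤ)) := by
    refine (hf k).neg_left.congr' ?_ EventuallyEq.rfl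
    filter_upwards [hf0] with σ hσ
    rw [sum_range_succ, sum_eq_zero fun j hj => by rw [ih j (mem_range.1 hj), zero_mul]]
    simp [hσ]
  have hconst : (fun _ : ℝ => c k) =O[atTop] fun σ : ℝ => σ⁻¹ := by
    refine (hk.mul (isBigO_refl (fun σ : ℝ => σ ^ (k : ℤ)) atTop)).congr' ?_ ?_ <;>
      filter_upwards [eventually_ne_atTop 0] with σ hσ
    · simp [hσ]
    · rw [← zpow_add₀ hσ, ← zpow_neg_one]; ring_nf
  exact tendsto_const_nhds_iff.1 (hconst.trans_tendsto tendsto_inv_atTop_zero)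

end HasAsymptoticExpansion

section SamplingRecursion

variable {d : ℕ}

theorem stdE_apply (i j : Fin d) : stdE i j = if j = i then 1 else 0 := rfl

theorem tot_add_stdE (n : Fin d → ℤ) (i : Fin d) : tot (n + stdE i) = tot n + 1 := by
  simp [tot, stdE, sum_add_distrib]

theorem tot_sub_stdE (n : Fin d → ℤ) (i : Fin d) : tot (n - stdE i) = tot n - 1 := by
  simp [tot, stdE, sum_sub_distrib]

theorem IsNatVec.sub_stdE {n : Fin d → ℤ} (hn : IsNatVec n) {i : Fin d} (hi : n i ≠ 0) :
    IsNatVec (n - stdE i) := fun j => by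
  have := hn j
  by_cases hji : j = i
  · subst hji; simp only [Pi.sub_apply, stdE_apply]; omega
  · simpa [stdE_apply, hji] using this

variable [NeZero d]

def rescaledProb (q : ℝ → (Fin d → ℤ) → ℝ) (m : Fin d → ℤ) (σ : ℝ) : ℝ :=
  σ ^ (tot m - m 0) * q σ m

theorem hasAsymptoticExpansion_rescaledProb {q : ℝ → (Fin d → ℤ) → ℝ}
    {qt : ℕ → (Fin d → ℤ) → ℝ}
    (hq : ∀ σ : ℝ, 0 < σ → ∀ n : Fin d → ℤ, (∃ i, n i < 0) → q σ n = 0)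
    (hqt : IsExpansionCoeffs q qt) (m : Fin d → ℤ) :
    HasAsymptoticExpansion (rescaledProb q m) (fun k => qt k m) := by
  by_cases hm : IsNatVec m
  · exact hqt.2.2.2 m hm
  · have hneg : ∃ i, m i < 0 := by simpa [IsNatVec] using hm
    rw [show (fun k => qt k m) = fun _ => 0 from funext fun k => hqt.2.2.1 k m hneg]
    refine HasAsymptoticExpansion.zero.congr ?_
    filter_upwards [eventually_gt_atTop 0] with σ hσ
    simp [rescaledProb, hq σ hσ m hneg]

theorem IsSamplingFamily.recursion_of_parentIndependent {θ : ℝ} {P : Fin d → Fin d → ℝ}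
    {q : ℝ → (Fin d → ℤ) → ℝ} (hq : IsSamplingFamily θ P q) {Q : Fin d → ℝ}
    (hPIM : ∀ i j, P i j = Q j) {σ : ℝ} (hσ : 0 < σ) {n : Fin d → ℤ} (hn : IsNatVec n)
    (hn0 : n ≠ 0) :
    ((tot n : ℝ) * ((tot n : ℝ) - 1 + θ) + ((tot n : ℝ) - (n 0 : ℝ)) * σ) * q σ n =
      (∑ i, (n i : ℝ) * ((n i : ℝ) - 1 + θ * Q i) * q σ (n - stdE i))
      + σ * (tot n : ℝ) * ∑ i ∈ univ.erase 0, q σ (n + stdE i) := by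
  -- consistency at `n - e_i` sums out the parent type `j`
  have hmutation (i : Fin d) : ∑ j, (n i : ℝ) * θ * P j i * q σ (n - stdE i + stdE j) =
      (n i : ℝ) * θ * Q i * q σ (n - stdE i) := by
    by_cases hi : n i = 0
    · simp [hi]
    · simp_rw [hPIM, ← mul_sum, hq.2.2.1 σ hσ _ (hn.sub_stdE hi)]
  rw [hq.2.2.2 σ hσ n hn hn0, sum_congr rfl fun i _ => hmutation i, ← sum_add_distrib]
  congr 2 with i
  ring

theorem rescaledProb_sub_stdE_zero (q : ℝ → (Fin d → ℤ) → ℝ) (n : Fin d → ℤ) (σ : ℝ) :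
    rescaledProb q (n - stdE 0) σ = σ ^ (tot n - n 0) * q σ (n - stdE 0) := by
  simp [rescaledProb, tot_sub_stdE, stdE_apply]

theorem rescaledProb_sub_stdE_of_ne (q : ℝ → (Fin d → ℤ) → ℝ) (n : Fin d → ℤ) {i : Fin d}
    (hi : i ≠ 0) (σ : ℝ) :
    rescaledProb q (n - stdE i) σ = σ ^ (tot n - n 0 - 1) * q σ (n - stdE i) := by
  simp [rescaledProb, tot_sub_stdE, stdE_apply, hi.symm, sub_right_comm]

theorem rescaledProb_add_stdE_of_ne (q : ℝ → (Fin d → ℤ) → ℝ) (n : Fin d → ℤ) {i : Fin d}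
    (hi : i ≠ 0) (σ : ℝ) :
    rescaledProb q (n + stdE i) σ = σ ^ (tot n - n 0 + 1) * q σ (n + stdE i) := by
  simp [rescaledProb, tot_add_stdE, stdE_apply, hi.symm, sub_add_eq_add_sub]

theorem IsSamplingFamily.rescaledProb_recursion_of_parentIndependent {θ : ℝ}
    {P : Fin d → Fin d → ℝ} {q : ℝ → (Fin d → ℤ) → ℝ} (hq : IsSamplingFamily θ P q)
    {Q : Fin d → ℝ} (hPIM : ∀ i j, P i j = Q j) {σ : ℝ} (hσ : 0 < σ) {n : Fin d → ℤ}
    (hn : IsNatVec n) :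
    ((tot n : ℝ) - (n 0 : ℝ)) * rescaledProb q n σ
      - ∑ i ∈ univ.erase 0,
          (n i : ℝ) * ((n i : ℝ) - 1 + θ * Q i) * rescaledProb q (n - stdE i) σ
      + σ⁻¹ * ((tot n : ℝ) * ((tot n : ℝ) - 1 + θ) * rescaledProb q n σ
          - (n 0 : ℝ) * ((n 0 : ℝ) - 1 + θ * Q 0) * rescaledProb q (n - stdE 0) σ
          - (tot n : ℝ) * ∑ i ∈ univ.erase 0, rescaledProb q (n + stdE i) σ) = 0 := by
  rcases eq_or_ne n 0 with rfl | hn0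
  · simp [tot]
  have hrec := hq.recursion_of_parentIndependent hPIM hσ hn hn0
  rw [← add_sum_erase _ _ (mem_univ 0)] at hrec
  set e := tot n - n 0
  have hpow : σ ^ e = σ ^ (e - 1) * σ := by rw [← zpow_add_one₀ hσ.ne', sub_add_cancel]
  have hpow' : σ ^ (e + 1) = σ ^ (e - 1) * σ * σ := by rw [zpow_add_one₀ hσ.ne', hpow]
  have hsub : ∑ i ∈ univ.erase 0,
      (n i : ℝ) * ((n i : ℝ) - 1 + θ * Q i) * rescaledProb q (n - stdE i) σ =
      σ ^ (e - 1) *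
        ∑ i ∈ univ.erase 0, (n i : ℝ) * ((n i : ℝ) - 1 + θ * Q i) * q σ (n - stdE i) := by
    rw [mul_sum]
    refine sum_congr rfl fun i hi => ?_
    rw [rescaledProb_sub_stdE_of_ne q n (ne_of_mem_erase hi)]
    ring
  have hadd : ∑ i ∈ univ.erase 0, rescaledProb q (n + stdE i) σ =
      σ ^ (e - 1) * σ * σ * ∑ i ∈ univ.erase 0, q σ (n + stdE i) := by
    rw [mul_sum]
    exact sum_congr rfl fun i hi => by
      rw [rescaledProb_add_stdE_of_ne q n (ne_of_mem_erase hi), hpow']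
  rw [hsub, hadd, rescaledProb_sub_stdE_zero, rescaledProb, hpow]
  field_simp
  linear_combination σ ^ (e - 1) * hrec

end SamplingRecursion

theorem recursion_general_PIM_general {d : ℕ} (θ : ℝ)
    (P : Fin (d + 2) → Fin (d + 2) → ℝ)
    (Q : Fin (d + 2) → ℝ)
    (hPIM : ∀ i j, P i j = Q j)
    (q : ℝ → (Fin (d + 2) → ℤ) → ℝ) (qt : ℕ → (Fin (d + 2) → ℤ) → ℝ)
    (hq : IsSamplingFamily θ P q) (hqt : IsExpansionCoeffs q qt)
    (k : ℕ) (n : Fin (d + 2) → ℤ) (hn : IsNatVec n) :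
    ((tot n : ℝ) - (n 0 : ℝ)) * qt k n
      = (∑ i ∈ univ.erase 0,
          (n i : ℝ) * ((n i : ℝ) - 1 + θ * Q i) * qt k (n - stdE i))
        + (if 1 ≤ k then
            - (tot n : ℝ) * ((tot n : ℝ) - 1 + θ) * qt (k - 1) n
            + (n 0 : ℝ) * ((n 0 : ℝ) - 1 + θ * Q 0) * qt (k - 1) (n - stdE 0)
            + (tot n : ℝ) * ∑ i ∈ univ.erase 0, qt (k - 1) (n + stdE i)
          else 0) := by
  have hr := hasAsymptoticExpansion_rescaledProb hq.2.1 hqt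
  -- term by term, the left side of `rescaledProb_recursion_of_parentIndependent`
  have hexpansion :=
    (((hr n).const_mul ((tot n : ℝ) - (n 0 : ℝ))).sub
      (HasAsymptoticExpansion.sum (s := univ.erase 0) fun i _ =>
        (hr (n - stdE i)).const_mul ((n i : ℝ) * ((n i : ℝ) - 1 + θ * Q i)))).add
    (((((hr n).const_mul ((tot n : ℝ) * ((tot n : ℝ) - 1 + θ))).sub
      ((hr (n - stdE 0)).const_mul ((n 0 : ℝ) * ((n 0 : ℝ) - 1 + θ * Q 0)))).sub
      ((HasAsymptoticExpansion.sum (s := univ.erase 0) fun i _ =>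
        hr (n + stdE i)).const_mul (tot n : ℝ))).inv_mul)
  have hcoeff := hexpansion.eq_zero_of_eventuallyEq_zero
    (by
      filter_upwards [eventually_gt_atTop 0] with σ hσ
      exact hq.rescaledProb_recursion_of_parentIndependent hPIM hσ hn) k
  split_ifs at hcoeff ⊢ <;> linarith

/-- **Corollary 4.4(IV)** (PIM; recursion, general): under parent-independent mutation
`P_{ij} = Q_j`, for every `n ∈ ℕ^d` with `‖n‖ > 1`. -/
theorem recursion_general_PIM {d : ℕ} (θ : ℝ) (hθ : 0 < θ)
    (P : Fin (d + 2) → Fin (d + 2) → ℝ)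
    (hPnonneg : ∀ i j, 0 ≤ P i j) (hProw : ∀ i, ∑ j, P i j = 1)
    (Q : Fin (d + 2) → ℝ) (hQpos : ∀ j, 0 < Q j) (hQsum : ∑ j, Q j = 1)
    (hPIM : ∀ i j, P i j = Q j)
    (q : ℝ → (Fin (d + 2) → ℤ) → ℝ) (qt : ℕ → (Fin (d + 2) → ℤ) → ℝ)
    (hq : IsSamplingFamily θ P q) (hqt : IsExpansionCoeffs q qt)
    (k : ℕ) (n : Fin (d + 2) → ℤ) (hn : IsNatVec n) (hsize : 1 < tot n) :
    ((tot n : ℝ) - (n 0 : ℝ)) * qt k n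
      = (∑ i ∈ univ.erase 0,
          (n i : ℝ) * ((n i : ℝ) - 1 + θ * Q i) * qt k (n - stdE i))
        + (if 1 ≤ k then
            - (tot n : ℝ) * ((tot n : ℝ) - 1 + θ) * qt (k - 1) n
            + (n 0 : ℝ) * ((n 0 : ℝ) - 1 + θ * Q 0) * qt (k - 1) (n - stdE 0)
            + (tot n : ℝ) * ∑ i ∈ univ.erase 0, qt (k - 1) (n + stdE i)
          else 0) :=
  recursion_general_PIM_general θ P Q hPIM q qt hq hqt k n hn
end
end
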